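/- Fix an irreducible e' ∈ ℤ² and a real r ≥ 1. Then the sum, over all e ∈ ℤ² with ‖e‖ ≤ r having e' as a parent, of 1/⟨e,e'⟩, is at most (2/‖e'‖²)·(1 + ln r). -/

import Mathlib

/-- Vectors of `ℤ²`. -/
abbrev V : Type := ℤ × ℤ

/-- Determinant of two vectors of `ℤ²`. -/
def det2 (f g : V) : ℤ := f.1 * g.2 - f.2 * g.1

/-- Standard inner product on `ℤ²`. -/
def dot (f g : V) : ℤ := f.1 * g.1 + f.2 * g.2

/-- Squared euclidean norm on `ℤ²`. -/
def nsq (e : V) : ℤ := e.1 ^ 2 + e.2 ^ 2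

/-- A vector of `ℤ²` is irreducible iff its coordinates are coprime. -/
def Irred (e : V) : Prop := Int.gcd e.1 e.2 = 1

/-- `(f, g)` are the parents of `e` : they form a direct acute basis summing to `e`. -/
def IsParents (f g e : V) : Prop := e = f + g ∧ det2 f g = 1 ∧ 0 ≤ dot f g

/-- `f` is a parent of `e`. -/
def IsParent (f e : V) : Prop := ∃ g : V, IsParents f g e ∨ IsParents g f e

/-- Embedding of `ℤ²` into `ℝ²`. -/
def toR (e : V) : ℝ × ℝ := ((e.1 : ℝ), (e.2 : ℝ))

/-!
A child `e = e' + g` of `e'` satisfies `det2 e' e = ±1` and `dot e e' ≥ ‖e'‖²`. On each line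
`det2 e' e = ε` a lattice point is determined by `dot e e'`, and since `e'` is primitive these values
lie in a single residue class mod `‖e'‖²`; by Cauchy–Schwarz they are at most `r ‖e'‖²` in the disk
of radius `r`. Their quotients by `‖e'‖²` are therefore distinct integers in `[1, r]`, so each line
contributes at most `(1 + ln r) / ‖e'‖²` by the harmonic bound.
-/

open Real

lemma sum_inv_le_one_add_log {K : Finset ℕ} {r : ℝ} (hr : 1 ≤ r)
    (hK : ∀ k ∈ K, 1 ≤ k ∧ (k : ℝ) ≤ r) :
    ∑ k ∈ K, (k : ℝ)⁻¹ ≤ 1 + log r := by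
  have hsub : K ⊆ Finset.Icc 1 ⌊r⌋₊ := fun k hk =>
    Finset.mem_Icc.mpr ⟨(hK k hk).1, Nat.le_floor (hK k hk).2⟩
  calc ∑ k ∈ K, (k : ℝ)⁻¹ ≤ ∑ k ∈ Finset.Icc 1 ⌊r⌋₊, (k : ℝ)⁻¹ :=
        Finset.sum_le_sum_of_subset_of_nonneg hsub fun _ _ _ => by positivity
    _ = harmonic ⌊r⌋₊ := by simp [harmonic_eq_sum_Icc]
    _ ≤ 1 + log ⌊r⌋₊ := harmonic_le_one_add_log _
    _ ≤ 1 + log r := by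
        gcongr
        · exact_mod_cast Nat.floor_pos.mpr hr
        · exact Nat.floor_le (by linarith)

lemma sum_inv_le_of_modEq {N : ℤ} (hN : 0 < N) {r : ℝ} (hr : 1 ≤ r) {D : Finset ℤ}
    (hD : ∀ d ∈ D, N ≤ d ∧ (d : ℝ) ≤ r * N)
    (hmod : ∀ d ∈ D, ∀ d' ∈ D, d ≡ d' [ZMOD N]) :
    ∑ d ∈ D, (1 : ℝ) / d ≤ (1 + log r) / N := by
  set q : ℤ → ℕ := fun d => (d / N).toNat
  have hq_cast : ∀ d ∈ D, (q d : ℤ) = d / N := fun d hd =>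
    Int.toNat_of_nonneg (Int.ediv_nonneg (hN.le.trans (hD d hd).1) hN.le)
  have hq_one : ∀ d ∈ D, 1 ≤ q d := fun d hd => by
    have := Int.le_ediv_of_mul_le (a := 1) hN (by simpa using (hD d hd).1)
    have := hq_cast d hd
    omega
  have hq_mul : ∀ d ∈ D, (N : ℝ) * q d ≤ d := fun d hd => by
    exact_mod_cast (hq_cast d hd).symm ▸ Int.mul_ediv_self_le hN.ne'
  have hNR : (0 : ℝ) < N := by exact_mod_cast hN
  have hq_le : ∀ d ∈ D, (q d : ℝ) ≤ r := fun d hd => by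
    nlinarith [hq_mul d hd, (hD d hd).2]
  have hq_inj : Set.InjOn q D := fun d hd d' hd' h => by
    have hq : d / N = d' / N := by rw [← hq_cast d hd, ← hq_cast d' hd', h]
    rw [← Int.mul_ediv_add_emod d N, ← Int.mul_ediv_add_emod d' N, hq, hmod d hd d' hd']
  calc ∑ d ∈ D, (1 : ℝ) / d ≤ ∑ d ∈ D, (N : ℝ)⁻¹ * (q d : ℝ)⁻¹ := by
        refine Finset.sum_le_sum fun d hd => ?_
        rw [← mul_inv, ← one_div]
        exact one_div_le_one_div_of_le (mul_pos hNR (by exact_mod_cast hq_one d hd)) (hq_mul d hd)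
    _ = (N : ℝ)⁻¹ * ∑ k ∈ D.image q, (k : ℝ)⁻¹ := by
        rw [Finset.sum_image hq_inj, Finset.mul_sum]
    _ ≤ (N : ℝ)⁻¹ * (1 + log r) := by
        gcongr
        refine sum_inv_le_one_add_log hr fun k hk => ?_
        obtain ⟨d, hd, rfl⟩ := Finset.mem_image.mp hk
        exact ⟨hq_one d hd, hq_le d hd⟩
    _ = (1 + log r) / N := by ring

lemma Irred.ne_zero {e : V} (he : Irred e) : e ≠ 0 := by
  rintro rfl
  simp [Irred] at he

lemma nsq_pos {e : V} (he : e ≠ 0) : 0 < nsq e := by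
  obtain ⟨a, b⟩ := e
  have : a ≠ 0 ∨ b ≠ 0 := by
    by_contra! h
    exact he (by rw [h.1, h.2]; rfl)
  unfold nsq
  rcases this with h | h <;> positivity

lemma nsq_nonneg (e : V) : 0 ≤ nsq e := by
  unfold nsq
  positivity

lemma dot_sq_le_nsq_mul_nsq (f g : V) : dot f g ^ 2 ≤ nsq f * nsq g := by
  simp only [dot, nsq]
  nlinarith [sq_nonneg (f.1 * g.2 - f.2 * g.1)]

lemma dot_le_mul_nsq {e e' : V} {r : ℝ} (he : √(nsq e : ℝ) ≤ r) (he' : 1 ≤ nsq e') :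
    (dot e e' : ℝ) ≤ r * nsq e' := by
  have hr : 0 ≤ r := (sqrt_nonneg _).trans he
  have hcs : ((dot e e' : ℤ) : ℝ) ^ 2 ≤ (nsq e : ℝ) * nsq e' := by
    exact_mod_cast dot_sq_le_nsq_mul_nsq e e'
  calc (dot e e' : ℝ) ≤ |(dot e e' : ℝ)| := le_abs_self _
    _ ≤ √((nsq e : ℝ) * nsq e') := abs_le_sqrt hcs
    _ = √(nsq e : ℝ) * √(nsq e' : ℝ) := sqrt_mul (by exact_mod_cast nsq_nonneg e) _
    _ ≤ r * nsq e' := by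
        gcongr
        exact sqrt_le_self_iff.mpr (Or.inr (by exact_mod_cast he'))

/-- `nsq e' • e = dot e e' • e' + det2 e' e • (-e'.2, e'.1)`. -/
lemma eq_of_det2_eq_of_dot_eq {e' e₁ e₂ : V} (he' : e' ≠ 0)
    (hdet : det2 e' e₁ = det2 e' e₂) (hdot : dot e₁ e' = dot e₂ e') : e₁ = e₂ := by
  have hN := (nsq_pos he').ne'
  simp only [det2, dot, nsq] at hdet hdot hN
  ext
  · exact mul_left_cancel₀ hN (by linear_combination e'.1 * hdot - e'.2 * hdet)
  · exact mul_left_cancel₀ hN (by linear_combination e'.2 * hdot + e'.1 * hdet)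

lemma dot_modEq_of_det2_eq {e' e₁ e₂ : V} (he' : Irred e') (h : det2 e' e₁ = det2 e' e₂) :
    dot e₁ e' ≡ dot e₂ e' [ZMOD nsq e'] := by
  obtain ⟨u, v, huv⟩ := Int.isCoprime_iff_gcd_eq_one.mpr he'
  -- `e₂ - e₁ = t • e'` with `t = u (e₂ - e₁).1 + v (e₂ - e₁).2`, so the dots differ by `t * nsq e'`.
  refine Int.modEq_iff_dvd.mpr ⟨u * (e₂.1 - e₁.1) + v * (e₂.2 - e₁.2), ?_⟩
  simp only [det2, dot, nsq] at h ⊢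
  linear_combination (e'.1 * v - e'.2 * u) * h
    - (e'.1 * (e₂.1 - e₁.1) + e'.2 * (e₂.2 - e₁.2)) * huv

lemma IsParent.det2_eq {e' e : V} (h : IsParent e' e) : det2 e' e = 1 ∨ det2 e' e = -1 := by
  obtain ⟨g, ⟨rfl, hdet, -⟩ | ⟨rfl, hdet, -⟩⟩ := h
  · left; simp only [det2, Prod.fst_add, Prod.snd_add] at hdet ⊢; linarith
  · right; simp only [det2, Prod.fst_add, Prod.snd_add] at hdet ⊢; linarith

lemma IsParent.nsq_le_dot {e' e : V} (h : IsParent e' e) : nsq e' ≤ dot e e' := by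
  obtain ⟨g, ⟨rfl, -, hdot⟩ | ⟨rfl, -, hdot⟩⟩ := h <;>
    simp only [dot, nsq, Prod.fst_add, Prod.snd_add] at hdot ⊢ <;> linarith

lemma finite_setOf_sqrt_nsq_le (r : ℝ) : {e : V | √(nsq e : ℝ) ≤ r}.Finite := by
  refine (Set.finite_Icc (-⌈r⌉, -⌈r⌉) (⌈r⌉, ⌈r⌉)).subset fun e he => ?_
  have hcoord : ∀ x : ℤ, x ^ 2 ≤ nsq e → -⌈r⌉ ≤ x ∧ x ≤ ⌈r⌉ := fun x hx => by
    have hx' : (x : ℝ) ^ 2 ≤ nsq e := by exact_mod_cast hx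
    obtain ⟨hlo, hhi⟩ := abs_le.mp ((abs_le_sqrt hx').trans he)
    have hceil := Int.le_ceil r
    constructor
    · exact_mod_cast (by push_cast; linarith : ((-⌈r⌉ : ℤ) : ℝ) ≤ x)
    · exact_mod_cast hhi.trans hceil
  have h1 := hcoord e.1 (by unfold nsq; nlinarith [sq_nonneg e.2])
  have h2 := hcoord e.2 (by unfold nsq; nlinarith [sq_nonneg e.1])
  exact ⟨Prod.mk_le_mk.mpr ⟨h1.1, h2.1⟩, Prod.mk_le_mk.mpr ⟨h1.2, h2.2⟩⟩

lemma sum_inv_dot_le_of_det2_eq {e' : V} (he' : Irred e') {r : ℝ} (hr : 1 ≤ r) {ε : ℤ}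
    {F : Finset V} (hF : ∀ e ∈ F, √(nsq e : ℝ) ≤ r ∧ nsq e' ≤ dot e e' ∧ det2 e' e = ε) :
    ∑ e ∈ F, (1 : ℝ) / (dot e e' : ℝ) ≤ (1 + log r) / nsq e' := by
  have hN := nsq_pos he'.ne_zero
  have hinj : Set.InjOn (dot · e') F := fun e₁ h₁ e₂ h₂ h =>
    eq_of_det2_eq_of_dot_eq he'.ne_zero ((hF e₁ h₁).2.2.trans (hF e₂ h₂).2.2.symm) h
  rw [← Finset.sum_image (f := fun d : ℤ => (1 : ℝ) / d) hinj]
  refine sum_inv_le_of_modEq hN hr (fun d hd => ?_) fun d hd d' hd' => ?_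
  · obtain ⟨e, he, rfl⟩ := Finset.mem_image.mp hd
    exact ⟨(hF e he).2.1, dot_le_mul_nsq (hF e he).1 hN⟩
  · obtain ⟨e, he, rfl⟩ := Finset.mem_image.mp hd
    obtain ⟨e₂, he₂, rfl⟩ := Finset.mem_image.mp hd'
    exact dot_modEq_of_det2_eq he' ((hF e he).2.2.trans (hF e₂ he₂).2.2.symm)

/-- The sum of `1/⟨e,e'⟩` over the children `e` of `e'` with `‖e‖ ≤ r` is at most
`(2/‖e'‖²)(1 + ln r)`. -/
theorem children_sum_bound (e' : V) (he' : Irred e') (r : ℝ) (hr : 1 ≤ r) :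
    ∑ᶠ e ∈ {e : V | Real.sqrt ((nsq e : ℝ)) ≤ r ∧ IsParent e' e},
        (1 : ℝ) / ((dot e e' : ℤ) : ℝ)
      ≤ 2 / ((nsq e' : ℤ) : ℝ) * (1 + Real.log r) := by
  have hfin : {e : V | √(nsq e : ℝ) ≤ r ∧ IsParent e' e}.Finite :=
    (finite_setOf_sqrt_nsq_le r).subset fun _ he => he.1
  have hchild : ∀ e ∈ hfin.toFinset, √(nsq e : ℝ) ≤ r ∧ IsParent e' e := fun e he =>
    hfin.mem_toFinset.mp he
  rw [finsum_mem_eq_finite_toFinset_sum _ hfin,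
    ← Finset.sum_filter_add_sum_filter_not _ (fun e => det2 e' e = 1)]
  have hbound (ε : ℤ) (p : V → Prop) [DecidablePred p]
      (hp : ∀ e, IsParent e' e → p e → det2 e' e = ε) :
      ∑ e ∈ hfin.toFinset.filter p, (1 : ℝ) / (dot e e' : ℝ) ≤ (1 + log r) / nsq e' :=
    sum_inv_dot_le_of_det2_eq he' hr fun e he => by
      obtain ⟨he, hpe⟩ := Finset.mem_filter.mp he
      exact ⟨(hchild e he).1, (hchild e he).2.nsq_le_dot, hp e (hchild e he).2 hpe⟩
  calc _ ≤ (1 + log r) / nsq e' + (1 + log r) / nsq e' :=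
        add_le_add (hbound 1 _ fun _ _ h => h)
          (hbound (-1) _ fun _ he h => he.det2_eq.resolve_left h)
    _ = 2 / nsq e' * (1 + log r) := by ring
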